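/- Let Γ be an n×n positive semidefinite complex matrix with all diagonal entries equal to 1 (a correlation matrix). Then for every Hermitian matrix M, the eigenvalue vector of the Schur (entrywise) product Γ ∘ M is majorized by the eigenvalue vector of M. -/

import Mathlib

open Matrix ComplexOrder

namespace Matrix.PosSemidef

/-- The square root of a positive semidefinite matrix, as defined in the older Mathlib. -/
noncomputable def sqrt {𝕜 : Type*} [RCLike 𝕜] {m : Type*} [Fintype m] [DecidableEq m]
    {A : Matrix m m 𝕜} (hA : A.PosSemidef) : Matrix m m 𝕜 :=
  hA.1.eigenvectorUnitary.1 * diagonal ((↑) ∘ (hA.1.eigenvalues · |>.sqrt)) *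
    (star hA.1.eigenvectorUnitary : Matrix m m 𝕜)

lemma posSemidef_sqrt {𝕜 : Type*} [RCLike 𝕜] {m : Type*} [Fintype m] [DecidableEq m]
    {A : Matrix m m 𝕜} (hA : A.PosSemidef) : PosSemidef hA.sqrt := by
  have hD : PosSemidef (diagonal ((↑) ∘ (hA.1.eigenvalues · |>.sqrt)) : Matrix m m 𝕜) := by
    refine posSemidef_diagonal_iff.mpr fun i => ?_
    rw [Function.comp_apply, RCLike.nonneg_iff]
    constructor
    · simp only [RCLike.ofReal_re]
      exact Real.sqrt_nonneg _
    · simp only [RCLike.ofReal_im]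
  have h := hD.mul_mul_conjTranspose_same (hA.1.eigenvectorUnitary : Matrix m m 𝕜)
  unfold sqrt
  convert h using 2
  exact star_eq_conjTranspose _

end Matrix.PosSemidef

namespace Heron

variable {n : ℕ}

def WeakMaj {n : ℕ} (x y : Fin n → ℝ) : Prop :=
  ∀ s : Finset (Fin n), ∃ t : Finset (Fin n),
    t.card = s.card ∧ ∑ i ∈ s, x i ≤ ∑ i ∈ t, y i

def Maj {n : ℕ} (x y : Fin n → ℝ) : Prop :=
  WeakMaj x y ∧ ∑ i, x i = ∑ i, y i

lemma sandwich_posSemidef {S T : Matrix (Fin n) (Fin n) ℂ} (hS : S.IsHermitian)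
    (hT : T.PosSemidef) : (S * T * S).PosSemidef := by
  have h := hT.mul_mul_conjTranspose_same S
  rwa [hS.eq] at h

noncomputable def geomMean {A B : Matrix (Fin n) (Fin n) ℂ}
    (hA : A.PosDef) (hB : B.PosDef) : Matrix (Fin n) (Fin n) ℂ :=
  hA.posSemidef.sqrt *
    (sandwich_posSemidef hA.posSemidef.posSemidef_sqrt.isHermitian.inv
        hB.posSemidef).sqrt *
    hA.posSemidef.sqrt

lemma geomMean_posSemidef {A B : Matrix (Fin n) (Fin n) ℂ}
    (hA : A.PosDef) (hB : B.PosDef) : (geomMean hA hB).PosSemidef :=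
  sandwich_posSemidef hA.posSemidef.posSemidef_sqrt.isHermitian
    (Matrix.PosSemidef.posSemidef_sqrt _)

noncomputable def specMean {A B : Matrix (Fin n) (Fin n) ℂ}
    (hA : A.PosDef) (hB : B.PosDef) : Matrix (Fin n) (Fin n) ℂ :=
  (geomMean_posSemidef hA.inv hB).sqrt * A * (geomMean_posSemidef hA.inv hB).sqrt

def HasPosSpectrum (M : Matrix (Fin n) (Fin n) ℂ) : Prop :=
  ∀ z ∈ spectrum ℂ M, 0 < z.re ∧ z.im = 0

def IsPrincipalSqrt (M S : Matrix (Fin n) (Fin n) ℂ) : Prop :=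
  S * S = M ∧ HasPosSpectrum S

noncomputable def absMat (Y : Matrix (Fin n) (Fin n) ℂ) : Matrix (Fin n) (Fin n) ℂ :=
  (Matrix.posSemidef_conjTranspose_mul_self Y).sqrt

noncomputable def posPart (H : Matrix (Fin n) (Fin n) ℂ) : Matrix (Fin n) (Fin n) ℂ :=
  ((1 : ℂ) / 2) • (absMat H + H)

end Heron

/-!
Let `U`, `W` be the unitary matrices of eigenvectors `uᵢ` of `Γ ∘ M` and `wⱼ` of `M`, and `μ` the
eigenvalues of `M`. Expanding `M = ∑ⱼ μⱼ wⱼ wⱼᴴ` gives `λᵢ(Γ ∘ M) = ∑ⱼ Dᵢⱼ μⱼ` with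
`Dᵢⱼ = uᵢᴴ (Γ ∘ wⱼ wⱼᴴ) uᵢ`. By the Schur product theorem `Dᵢⱼ ≥ 0`; since `∑ⱼ wⱼ wⱼᴴ = 1` and
`Γ ∘ 1 = 1`, every row of `D` sums to `1`, and the column sums are the traces
`tr (Γ ∘ wⱼ wⱼᴴ) = ‖wⱼ‖² = 1`. So `D` is doubly stochastic, and then `Dμ ≺ μ`: a sum of `k`
entries of `Dμ` is `∑ⱼ qⱼ μⱼ` with weights `0 ≤ qⱼ ≤ 1` of total mass `k`, which is at most the sum
of the `k` largest `μⱼ`.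
-/

namespace Finset

variable {ι : Type*} [Fintype ι]

lemma exists_card_eq_separated_by_threshold (y : ι → ℝ) {k : ℕ}
    (hk : k ≤ Fintype.card ι) :
    ∃ t : Finset ι, ∃ c, #t = k ∧ (∀ j ∈ t, c ≤ y j) ∧ ∀ j ∉ t, y j ≤ c := by
  rcases Nat.eq_zero_or_pos k with rfl | hk0
  · obtain ⟨c, hc⟩ := (Set.finite_range y).bddAbove
    exact ⟨∅, c, rfl, by simp, fun j _ => hc ⟨j, rfl⟩⟩
  classical
  obtain ⟨t, ht, hmax⟩ := exists_max_image (powersetCard k univ) (fun t => ∑ j ∈ t, y j)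
    (powersetCard_nonempty.2 (by simpa using hk))
  rw [mem_powersetCard_univ] at ht
  obtain ⟨m, hm, hmin⟩ := t.exists_min_image y (card_pos.1 (ht ▸ hk0))
  refine ⟨t, y m, ht, hmin, fun i hi => ?_⟩
  by_contra! hlt
  have hi' : i ∉ t.erase m := fun h => hi (mem_of_mem_erase h)
  have hswap := hmax (insert i (t.erase m)) <| mem_powersetCard_univ.2 <| by
    rw [card_insert_of_notMem hi', card_erase_of_mem hm, ht]
    omega
  rw [sum_insert hi', sum_erase_eq_sub hm] at hswap
  linarith

lemma sum_mul_le_sum_of_separated_by_threshold {q y : ι → ℝ} {t : Finset ι} {c : ℝ}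
    (hq0 : ∀ j, 0 ≤ q j) (hq1 : ∀ j, q j ≤ 1) (hq : ∑ j, q j = #t)
    (hyt : ∀ j ∈ t, c ≤ y j) (hyc : ∀ j ∉ t, y j ≤ c) :
    ∑ j, q j * y j ≤ ∑ j ∈ t, y j := by
  classical
  have hpointwise : ∀ j, q j * (y j - c) ≤ if j ∈ t then y j - c else 0 := by
    intro j
    split_ifs with hj
    · exact mul_le_of_le_one_left (sub_nonneg.2 (hyt j hj)) (hq1 j)
    · exact mul_nonpos_of_nonneg_of_nonpos (hq0 j) (sub_nonpos.2 (hyc j hj))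
  calc ∑ j, q j * y j = ∑ j, q j * (y j - c) + #t * c := by
        simp [mul_sub, ← sum_mul, hq]
    _ ≤ ∑ j, (if j ∈ t then y j - c else 0) + #t * c := by
      gcongr with j; exact hpointwise j
    _ = ∑ j ∈ t, y j := by simp [sum_sub_distrib]

lemma exists_card_eq_sum_mul_le_sum (y : ι → ℝ) {q : ι → ℝ} (hq0 : ∀ j, 0 ≤ q j)
    (hq1 : ∀ j, q j ≤ 1) {k : ℕ} (hq : ∑ j, q j = k) :
    ∃ t : Finset ι, #t = k ∧ ∑ j, q j * y j ≤ ∑ j ∈ t, y j := by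
  have hk : k ≤ Fintype.card ι := by
    have : ∑ j, q j ≤ ∑ _j : ι, (1 : ℝ) := sum_le_sum fun j _ => hq1 j
    exact_mod_cast (by simpa [hq] using this : (k : ℝ) ≤ Fintype.card ι)
  obtain ⟨t, c, ht, hyt, hyc⟩ := exists_card_eq_separated_by_threshold y hk
  exact ⟨t, ht, sum_mul_le_sum_of_separated_by_threshold hq0 hq1 (ht ▸ hq) hyt hyc⟩

end Finset

namespace Matrix

lemma hadamard_sum {α m n κ : Type*} [NonUnitalNonAssocSemiring α] (s : Finset κ)
    (A : Matrix m n α) (B : κ → Matrix m n α) : A ⊙ ∑ k ∈ s, B k = ∑ k ∈ s, A ⊙ B k := by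
  ext a b
  simp [hadamard_apply, Matrix.sum_apply, Finset.mul_sum]

variable {𝕜 ι : Type*} [RCLike 𝕜] [Fintype ι]

lemma mul_diagonal_mul_conjTranspose_eq_sum_vecMulVec [DecidableEq ι] (W : Matrix ι ι 𝕜)
    (d : ι → 𝕜) :
    W * diagonal d * Wᴴ = ∑ j, d j • vecMulVec (Wᵀ j) (star (Wᵀ j)) := by
  ext a b
  rw [mul_apply]
  simp only [mul_diagonal, Matrix.sum_apply, smul_apply, vecMulVec_apply, transpose_apply,
    conjTranspose_apply, Pi.star_apply, smul_eq_mul]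
  exact Finset.sum_congr rfl fun j _ => by ring

lemma mul_conjTranspose_eq_sum_vecMulVec [DecidableEq ι] (W : Matrix ι ι 𝕜) :
    W * Wᴴ = ∑ j, vecMulVec (Wᵀ j) (star (Wᵀ j)) := by
  simpa using W.mul_diagonal_mul_conjTranspose_eq_sum_vecMulVec 1

noncomputable def schurWeights (Γ U W : Matrix ι ι 𝕜) : Matrix ι ι ℝ :=
  of fun i j => RCLike.re ((Uᴴ * (Γ ⊙ vecMulVec (Wᵀ j) (star (Wᵀ j))) * U) i i)

variable {Γ U W : Matrix ι ι 𝕜}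

lemma schurWeights_nonneg (hΓ : Γ.PosSemidef) (i j : ι) : 0 ≤ schurWeights Γ U W i j := by
  have hB := hΓ.hadamard (posSemidef_vecMulVec_self_star (Wᵀ j))
  exact (RCLike.nonneg_iff.mp (hB.conjTranspose_mul_mul_same U).diag_nonneg).1

variable [DecidableEq ι]

lemma sum_schurWeights_row (hΓ : ∀ a, Γ a a = 1) (hU : U ∈ unitaryGroup ι 𝕜)
    (hW : W ∈ unitaryGroup ι 𝕜) (i : ι) :
    ∑ j, schurWeights Γ U W i j = 1 := by
  have hB : ∑ j, Γ ⊙ vecMulVec (Wᵀ j) (star (Wᵀ j)) = 1 := by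
    rw [← hadamard_sum, ← mul_conjTranspose_eq_sum_vecMulVec, ← star_eq_conjTranspose,
      mem_unitaryGroup_iff.1 hW, hadamard_one]
    ext a b; simp [diagonal, one_apply, hΓ]
  calc ∑ j, schurWeights Γ U W i j
      = RCLike.re ((Uᴴ * (∑ j, Γ ⊙ vecMulVec (Wᵀ j) (star (Wᵀ j))) * U) i i) := by
        simp [schurWeights, Finset.mul_sum, Finset.sum_mul, Matrix.sum_apply]
    _ = 1 := by
      rw [hB, Matrix.mul_one, ← star_eq_conjTranspose, mem_unitaryGroup_iff'.1 hU, one_apply_eq,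
        RCLike.one_re]

lemma sum_schurWeights_col (hΓ : ∀ a, Γ a a = 1) (hU : U ∈ unitaryGroup ι 𝕜)
    (hW : W ∈ unitaryGroup ι 𝕜) (j : ι) :
    ∑ i, schurWeights Γ U W i j = 1 := by
  set B := Γ ⊙ vecMulVec (Wᵀ j) (star (Wᵀ j))
  have htrace : trace B = (Wᴴ * W) j j := by
    simp only [trace, diag, B, hadamard_apply, hΓ, one_mul, vecMulVec_apply, mul_apply,
      transpose_apply, conjTranspose_apply, Pi.star_apply, mul_comm]
  calc ∑ i, schurWeights Γ U W i j = RCLike.re (trace (Uᴴ * B * U)) := by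
        simp [schurWeights, trace, B]
    _ = 1 := by
      rw [trace_mul_cycle, ← star_eq_conjTranspose, mem_unitaryGroup_iff.1 hU, Matrix.one_mul,
        htrace, ← star_eq_conjTranspose, mem_unitaryGroup_iff'.1 hW, one_apply_eq, RCLike.one_re]

lemma schurWeights_mem_doublyStochastic (hΓ : Γ.PosSemidef) (hΓ1 : ∀ a, Γ a a = 1)
    (hU : U ∈ unitaryGroup ι 𝕜) (hW : W ∈ unitaryGroup ι 𝕜) :
    schurWeights Γ U W ∈ doublyStochastic ℝ ι :=
  mem_doublyStochastic_iff_sum.2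
    ⟨schurWeights_nonneg hΓ, sum_schurWeights_row hΓ1 hU hW, sum_schurWeights_col hΓ1 hU hW⟩

lemma IsHermitian.eigenvalues_hadamard {M : Matrix ι ι 𝕜} (hM : M.IsHermitian)
    (hA : (Γ ⊙ M).IsHermitian) :
    hA.eigenvalues = schurWeights Γ (hA.eigenvectorUnitary : Matrix ι ι 𝕜)
      hM.eigenvectorUnitary *ᵥ hM.eigenvalues := by
  set U : Matrix ι ι 𝕜 := ↑hA.eigenvectorUnitary
  set W : Matrix ι ι 𝕜 := ↑hM.eigenvectorUnitary
  have hdiagonalize : Uᴴ * (Γ ⊙ M) * U = diagonal (RCLike.ofReal ∘ hA.eigenvalues) := by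
    simpa [star_eq_conjTranspose] using hA.conjStarAlgAut_star_eigenvectorUnitary
  have hexpand :
      Γ ⊙ M = ∑ j, (hM.eigenvalues j : 𝕜) • (Γ ⊙ vecMulVec (Wᵀ j) (star (Wᵀ j))) := by
    conv_lhs => rw [hM.spectral_theorem]
    simp [star_eq_conjTranspose, mul_diagonal_mul_conjTranspose_eq_sum_vecMulVec, hadamard_sum,
      hadamard_smul, W]
  ext i
  calc hA.eigenvalues i = RCLike.re ((Uᴴ * (Γ ⊙ M) * U) i i) := by simp [hdiagonalize]
    _ = (schurWeights Γ U W *ᵥ hM.eigenvalues) i := by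
      simp [hexpand, Finset.mul_sum, Finset.sum_mul, Matrix.sum_apply, mulVec, dotProduct,
        schurWeights, RCLike.smul_re, mul_comm (hM.eigenvalues _)]

end Matrix

namespace Heron

lemma maj_mulVec_of_mem_doublyStochastic {D : Matrix (Fin n) (Fin n) ℝ}
    (hD : D ∈ doublyStochastic ℝ (Fin n)) (y : Fin n → ℝ) : Maj (D *ᵥ y) y := by
  refine ⟨fun s => ?_, sum_mulVec_of_mem_doublyStochastic hD⟩
  have hcol : ∀ j, ∑ i ∈ s, D i j ≤ 1 := fun j =>
    (Finset.sum_le_sum_of_subset_of_nonneg s.subset_univ fun i _ _ => hD.1 i j).trans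
      (sum_col_of_mem_doublyStochastic hD j).le
  have hmass : ∑ j, ∑ i ∈ s, D i j = s.card := by
    simp [Finset.sum_comm (s := Finset.univ), sum_row_of_mem_doublyStochastic hD]
  obtain ⟨t, ht, hle⟩ := Finset.exists_card_eq_sum_mul_le_sum y
    (fun j => Finset.sum_nonneg fun i _ => hD.1 i j) hcol hmass
  refine ⟨t, ht, le_of_eq_of_le ?_ hle⟩
  simp [mulVec, dotProduct, Finset.sum_mul, Finset.sum_comm (s := s)]

/-- Schur multiplication by a correlation matrix produces a
majorized eigenvalue vector (Bapat–Sunder). -/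
theorem schur_correlation_majorization {n : ℕ} (Γ M : Matrix (Fin n) (Fin n) ℂ)
    (hΓ : Γ.PosSemidef) (hdiag : ∀ i, Γ i i = 1) (hM : M.IsHermitian)
    (hSchur : (Matrix.hadamard Γ M).IsHermitian) :
    Maj hSchur.eigenvalues hM.eigenvalues := by
  rw [hM.eigenvalues_hadamard hSchur]
  exact maj_mulVec_of_mem_doublyStochastic
    (schurWeights_mem_doublyStochastic hΓ hdiag (SetLike.coe_mem _) (SetLike.coe_mem _)) _

end Heron
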